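/- arXiv:2201.00960 — 6 statements merged into one kernel-verified Lean document; each statement's English description precedes it below -/
import Mathlib

section
/- There does not exist any function f : ℝ → ℝ such that f(f(x)) = x^2 - 2 for all real x. -/
theorem no_functional_sqrt_of_x_sq_sub_two :
    ¬ ∃ f : ℝ → ℝ, ∀ x : ℝ, f (f x) = x ^ 2 - 2 := by
  rintro ⟨f, hf⟩
  set s := Real.sqrt 5 with hs_def
  have hs : s ^ 2 = 5 := Real.sq_sqrt (by norm_num)
  have hs0 : (0:ℝ) < s := Real.sqrt_pos.mpr (by norm_num)
  set a : ℝ := (-1 + s) / 2 with ha_def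
  set b : ℝ := (-1 - s) / 2 with hb_def
  have hne : a ≠ b := by
    simp only [ha_def, hb_def]; intro h; nlinarith
  have hga : a ^ 2 - 2 = b := by simp only [ha_def, hb_def]; nlinarith
  have hgb : b ^ 2 - 2 = a := by simp only [ha_def, hb_def]; nlinarith
  set u := f a with hu
  set v := f b with hv
  have hfu : f u = b := by rw [hu, hf a, hga]
  have hfv : f v = a := by rw [hv, hf b, hgb]
  have huv : v = u ^ 2 - 2 := by
    have h := hf u
    rw [hfu] at h
    rw [← h, hv]
  have hvu : u = v ^ 2 - 2 := by
    have h := hf v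
    rw [hfv] at h
    rw [← h, hu]
  have hcase : u = v ∨ u + v = -1 := by
    rcases mul_eq_zero.mp (show (u - v) * (u + v + 1) = 0 by nlinarith) with h | h
    · left; linarith
    · right; linarith
  rcases hcase with h | h
  · exact hne (by rw [← hfv, ← h, hfu])
  · have hquad : (u - a) * (u - b) = 0 := by
      have hq : u ^ 2 + u - 1 = 0 := by nlinarith
      have hab : a + b = -1 := by simp only [ha_def, hb_def]; ring
      have hab2 : a * b = -1 := by simp only [ha_def, hb_def]; nlinarith
      nlinarith
    rcases mul_eq_zero.mp hquad with h' | h'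
    · have hua : u = a := by linarith
      have : b = a := by
        calc b = f u := hfu.symm
        _ = f a := by rw [hua]
        _ = u := hu.symm
        _ = a := hua
      exact hne this.symm
    · have hub : u = b := by linarith
      have hva : v = a := by rw [huv, hub]; exact hgb
      have : a = b := by
        calc a = f v := hfv.symm
        _ = f a := by rw [hva]
        _ = u := hu.symm
        _ = b := hub
      exact hne this
end

section
/- Let α be a type and g : α → α. Suppose there exist pairwise distinct elements a, b, c, d of α such that the set of fixed points of g is exactly {a, b} and the set of fixed points of g ∘ g is exactly {a, b, c, d}. Then there is no function f : α → α with f ∘ f = g. -/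
theorem no_functional_sqrt_of_two_four_fixed_points
    {α : Type*} (g : α → α) (a b c d : α)
    (hab : a ≠ b) (hac : a ≠ c) (had : a ≠ d) (hbc : b ≠ c) (hbd : b ≠ d) (hcd : c ≠ d)
    (hg : {x : α | g x = x} = {a, b})
    (hgg : {x : α | g (g x) = x} = {a, b, c, d}) :
    ¬ ∃ f : α → α, f ∘ f = g := by
  rintro ⟨f, hf⟩
  have hff : ∀ x, f (f x) = g x := fun x => congrFun hf x
  have hfg : ∀ x, f (g x) = g (f x) := by
    intro x; rw [← hff x, ← hff (f x)]
  have hmem : ∀ x, g x = x ↔ x = a ∨ x = b := by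
    intro x; simpa using Set.ext_iff.mp hg x
  have hmem2 : ∀ x, g (g x) = x ↔ x = a ∨ x = b ∨ x = c ∨ x = d := by
    intro x; simpa using Set.ext_iff.mp hgg x
  have hga : g a = a := (hmem a).mpr (Or.inl rfl)
  have hgb : g b = b := (hmem b).mpr (Or.inr rfl)
  have hcgg : g (g c) = c := (hmem2 c).mpr (by tauto)
  have hdgg : g (g d) = d := (hmem2 d).mpr (by tauto)
  have hgc : g c = d := by
    have h1 : g (g (g c)) = g c := by rw [hcgg]
    rcases (hmem2 (g c)).mp h1 with h | h | h | h
    · exact absurd (by rw [← hcgg, h, hga]) hac.symm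
    · exact absurd (by rw [← hcgg, h, hgb]) hbc.symm
    · rcases (hmem c).mp h with h' | h' <;> [exact absurd h'.symm hac; exact absurd h'.symm hbc]
    · exact h
  have hgd : g d = c := by rw [← hcgg, hgc]
  -- f maps fixed points of g to fixed points of g
  have hfa : f a = a ∨ f a = b := (hmem (f a)).mp (by rw [← hfg, hga])
  -- f c is a fixed point of g∘g
  have hfc2 : g (g (f c)) = f c := by rw [← hfg, ← hfg, hcgg]
  have hfc : f c = c ∨ f c = d := by
    rcases (hmem2 (f c)).mp hfc2 with h | h | h | h
    · exfalso
      have : g c = f a := by rw [← hff c, h]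
      rw [hgc] at this
      rcases hfa with h' | h' <;> rw [h'] at this
      · exact had this.symm
      · exact hbd this.symm
    · exfalso
      have hfb : f b = a ∨ f b = b := (hmem (f b)).mp (by rw [← hfg, hgb])
      have : g c = f b := by rw [← hff c, h]
      rw [hgc] at this
      rcases hfb with h' | h' <;> rw [h'] at this
      · exact had this.symm
      · exact hbd this.symm
    · exact Or.inl h
    · exact Or.inr h
  rcases hfc with h | h
  · have : g c = c := by rw [← hff c, h, h]
    rw [hgc] at this; exact hcd this.symm
  · -- f c = d; then f d is also determined
    have hfd2 : g (g (f d)) = f d := by rw [← hfg, ← hfg, hdgg]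
    have : g c = f d := by rw [← hff c, h]
    rw [hgc] at this
    have : g d = d := by rw [← hff d, ← this, ← this]
    rw [hgd] at this; exact hcd this
end

section
/- Let α be a type and g : α → α. Suppose a, b, c, d are pairwise distinct elements of α such that the set of fixed points of g is exactly {a, b} and the set of fixed points of g ∘ g is exactly {a, b, c, d}. Then g(c) = d and g(d) = c. -/
theorem g_swaps_extra_fixed_points
    {α : Type*} (g : α → α) (a b c d : α)
    (hab : a ≠ b) (hac : a ≠ c) (had : a ≠ d) (hbc : b ≠ c) (hbd : b ≠ d) (hcd : c ≠ d)
    (hg : {x : α | g x = x} = {a, b})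
    (hgg : {x : α | g (g x) = x} = {a, b, c, d}) :
    g c = d ∧ g d = c := by
  have ha : g a = a := by
    have : a ∈ {x : α | g x = x} := by rw [hg]; simp
    exact this
  have hb : g b = b := by
    have : b ∈ {x : α | g x = x} := by rw [hg]; simp
    exact this
  have hc : g (g c) = c := by
    have : c ∈ {x : α | g (g x) = x} := by rw [hgg]; simp
    exact this
  have hgc : g (g (g c)) = g c := by rw [hc]
  have hmem : g c ∈ ({a, b, c, d} : Set α) := by rw [← hgg]; exact hgc
  have hnc : g c ≠ c := by
    intro h
    have : c ∈ {x : α | g x = x} := h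
    rw [hg] at this
    rcases this with h | h <;> [exact hac h.symm; exact hbc h.symm]
  have hna : g c ≠ a := by
    intro h
    have : c = a := by rw [← hc, h, ha]
    exact hac this.symm
  have hnb : g c ≠ b := by
    intro h
    have : c = b := by rw [← hc, h, hb]
    exact hbc this.symm
  have hcd' : g c = d := by
    rcases hmem with h | h | h | h
    · exact absurd h hna
    · exact absurd h hnb
    · exact absurd h hnc
    · exact h
  exact ⟨hcd', by rw [← hcd', hc]⟩
end

section
/- Let n ≥ 1, F : ℝ^n → ℝ^n, x ∈ ℝ^n, τ > 0 and ε ≥ 0. Let g : ℝ^n → ℝ^n satisfy ‖g(y) - (F(y) - y)/(2τ)‖ ≤ ε for all y ∈ ℝ^n. Let z : ℝ → ℝ^n be continuous on [0, 2τ] with z(t) = x for all t ∈ [-τ, 0], and suppose that for every t ∈ [0, 2τ), z has right derivative g(z(τ·⌊(t - τ)/τ⌋)) at t (derivative within [t, ∞)). Then ‖z(2τ) - F(x)‖ ≤ 2τ·ε. In particular, if g(y) = (F(y) - y)/(2τ) exactly, then z(2τ) = F(x). -/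
/-!
With constant initial history the delayed state `z (τ * ⌊(t - τ) / τ⌋)` stays equal to `x` on
`[0, 2τ)`, since the delay point is `-τ` or `0`. Hence `z` has constant right derivative `g x`,
so `z (2τ) = x + 2τ • g x`, which differs from `F x` by `2τ • (g x - (F x - x) / (2τ))`.
-/

open Set

theorem mul_floor_sub_div_mem_Icc {τ t : ℝ} (hτ : 0 < τ) (ht : t ∈ Ico 0 (2 * τ)) :
    τ * ⌊(t - τ) / τ⌋ ∈ Icc (-τ) 0 := by
  obtain ⟨ht0, ht2⟩ := ht
  have hge : (-1 : ℤ) ≤ ⌊(t - τ) / τ⌋ := by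
    rw [Int.le_floor, le_div_iff₀ hτ]
    push_cast
    linarith
  have hle : ⌊(t - τ) / τ⌋ ≤ 0 := by
    rw [← Int.lt_add_one_iff, Int.floor_lt, div_lt_iff₀ hτ]
    push_cast
    linarith
  have hge' : (-1 : ℝ) ≤ ⌊(t - τ) / τ⌋ := by exact_mod_cast hge
  have hle' : (⌊(t - τ) / τ⌋ : ℝ) ≤ 0 := by exact_mod_cast hle
  constructor <;> nlinarith

section ConstantRightDerivative

variable {E : Type*} [NormedAddCommGroup E] [NormedSpace ℝ E]

theorem eq_add_sub_smul_of_hasDerivWithinAt_Ici {f : ℝ → E} {v : E} {a b : ℝ} (hab : a ≤ b)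
    (hf : ContinuousOn f (Icc a b)) (hf' : ∀ t ∈ Ico a b, HasDerivWithinAt f v (Ici t) t) :
    f b = f a + (b - a) • v := by
  have hconst := constant_of_has_deriv_right_zero (f := fun t => f t - t • v)
    (hf.sub (continuous_id.smul continuous_const).continuousOn)
    (fun t ht => by
      have h := (hf' t ht).sub ((hasDerivWithinAt_id t (Ici t)).smul_const v)
      rwa [one_smul, sub_self] at h)
    b (right_mem_Icc.2 hab)
  rw [sub_smul, ← sub_eq_iff_eq_add', sub_eq_sub_iff_sub_eq_sub]
  exact hconst

theorem npcdde_apply_two_mul_eq {g : E → E} {z : ℝ → E} {x : E} {τ : ℝ} (hτ : 0 < τ)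
    (hzc : ContinuousOn z (Icc 0 (2 * τ)))
    (hz0 : ∀ t ∈ Icc (-τ) 0, z t = x)
    (hz' : ∀ t ∈ Ico 0 (2 * τ),
      HasDerivWithinAt z (g (z (τ * ⌊(t - τ) / τ⌋))) (Ici t) t) :
    z (2 * τ) = x + (2 * τ) • g x := by
  have hz'' : ∀ t ∈ Ico 0 (2 * τ), HasDerivWithinAt z (g x) (Ici t) t := fun t ht => by
    simpa only [hz0 _ (mul_floor_sub_div_mem_Icc hτ ht)] using hz' t ht
  rw [eq_add_sub_smul_of_hasDerivWithinAt_Ici (by positivity) hzc hz'', sub_zero,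
    hz0 0 ⟨by linarith, le_rfl⟩]

end ConstantRightDerivative

theorem npcdde_universal_approximation_general
    (n : ℕ)
    (F : EuclideanSpace ℝ (Fin n) → EuclideanSpace ℝ (Fin n))
    (x : EuclideanSpace ℝ (Fin n)) (τ : ℝ) (hτ : 0 < τ) (ε : ℝ)
    (g : EuclideanSpace ℝ (Fin n) → EuclideanSpace ℝ (Fin n))
    (hg : ∀ y, ‖g y - (2 * τ)⁻¹ • (F y - y)‖ ≤ ε)
    (z : ℝ → EuclideanSpace ℝ (Fin n))
    (hzc : ContinuousOn z (Set.Icc 0 (2 * τ)))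
    (hz0 : ∀ t ∈ Set.Icc (-τ) 0, z t = x)
    (hz' : ∀ t ∈ Set.Ico 0 (2 * τ),
      HasDerivWithinAt z (g (z (τ * ↑⌊(t - τ) / τ⌋))) (Set.Ici t) t) :
    ‖z (2 * τ) - F x‖ ≤ 2 * τ * ε ∧
      ((∀ y, g y = (2 * τ)⁻¹ • (F y - y)) → z (2 * τ) = F x) := by
  have h2τ : 0 < 2 * τ := by positivity
  have hend := npcdde_apply_two_mul_eq hτ hzc hz0 hz'
  refine ⟨?_, fun hgF => by rw [hend, hgF x, smul_inv_smul₀ h2τ.ne', add_sub_cancel]⟩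
  calc ‖z (2 * τ) - F x‖ = ‖(2 * τ) • (g x - (2 * τ)⁻¹ • (F x - x))‖ := by
        rw [hend, smul_sub, smul_inv_smul₀ h2τ.ne']
        abel_nf
    _ = 2 * τ * ‖g x - (2 * τ)⁻¹ • (F x - x)‖ := by rw [norm_smul, Real.norm_of_nonneg h2τ.le]
    _ ≤ 2 * τ * ε := mul_le_mul_of_nonneg_left (hg x) h2τ.le

theorem npcdde_universal_approximation
    (n : ℕ) (hn : 1 ≤ n)
    (F : EuclideanSpace ℝ (Fin n) → EuclideanSpace ℝ (Fin n))
    (x : EuclideanSpace ℝ (Fin n)) (τ : ℝ) (hτ : 0 < τ) (ε : ℝ) (hε : 0 ≤ ε)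
    (g : EuclideanSpace ℝ (Fin n) → EuclideanSpace ℝ (Fin n))
    (hg : ∀ y, ‖g y - (2 * τ)⁻¹ • (F y - y)‖ ≤ ε)
    (z : ℝ → EuclideanSpace ℝ (Fin n))
    (hzc : ContinuousOn z (Set.Icc 0 (2 * τ)))
    (hz0 : ∀ t ∈ Set.Icc (-τ) 0, z t = x)
    (hz' : ∀ t ∈ Set.Ico 0 (2 * τ),
      HasDerivWithinAt z (g (z (τ * ↑⌊(t - τ) / τ⌋))) (Set.Ici t) t) :
    ‖z (2 * τ) - F x‖ ≤ 2 * τ * ε ∧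
      ((∀ y, g y = (2 * τ)⁻¹ • (F y - y)) → z (2 * τ) = F x) :=
  npcdde_universal_approximation_general n F x τ hτ ε g hg z hzc hz0 hz'
end

section
/- Let n ≥ 1, τ > 0, N a natural number, f : ℝ^n → ℝ^n, x ∈ ℝ^n, and let z : ℝ → ℝ^n be continuous on [0, Nτ] with z(0) = x, such that for every t ∈ [0, Nτ), z has right derivative f(z(τ·⌊t/τ⌋)) at t (derivative within [t, ∞)). Define F̂ : ℝ^n → ℝ^n by F̂(y) = y + τ·f(y). Then z(Nτ) = F̂^[N](x), the N-fold iterate of F̂ applied to x. -/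
theorem npcdde_sampled_flow_eq_iterate
    (n : ℕ) (hn : 1 ≤ n) (τ : ℝ) (hτ : 0 < τ) (N : ℕ)
    (f : EuclideanSpace ℝ (Fin n) → EuclideanSpace ℝ (Fin n))
    (x : EuclideanSpace ℝ (Fin n)) (z : ℝ → EuclideanSpace ℝ (Fin n))
    (hzc : ContinuousOn z (Set.Icc 0 (N * τ)))
    (hz0 : z 0 = x)
    (hz' : ∀ t ∈ Set.Ico (0 : ℝ) (N * τ),
      HasDerivWithinAt z (f (z (τ * ↑⌊t / τ⌋))) (Set.Ici t) t) :
    z (N * τ) = (fun y => y + τ • f y)^[N] x := by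
  suffices h : ∀ k : ℕ, k ≤ N → z (k * τ) = (fun y => y + τ • f y)^[k] x from h N le_rfl
  intro k hk
  induction k with
  | zero => simpa using hz0
  | succ k ih =>
    have hkN : (k : ℝ) * τ ≤ N * τ := by
      have : (k : ℝ) ≤ N := by exact_mod_cast Nat.le_of_succ_le hk
      nlinarith
    have hk1N : ((k + 1 : ℕ) : ℝ) * τ ≤ N * τ := by
      have : ((k + 1 : ℕ) : ℝ) ≤ N := by exact_mod_cast hk
      nlinarith
    have hkk1 : (k : ℝ) * τ < ((k + 1 : ℕ) : ℝ) * τ := by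
      push_cast; nlinarith
    set a : ℝ := (k : ℝ) * τ
    set b : ℝ := ((k + 1 : ℕ) : ℝ) * τ
    have ha0 : (0 : ℝ) ≤ a := by positivity
    have hc := ih (Nat.le_of_succ_le hk)
    -- on [a, b), the floor is k
    have hfloor : ∀ t ∈ Set.Ico a b, τ * (⌊t / τ⌋ : ℝ) = a := by
      intro t ht
      have h1 : (k : ℝ) ≤ t / τ := (le_div_iff₀ hτ).2 (by simpa [a, mul_comm] using ht.1)
      have h2 : t / τ < (k : ℝ) + 1 := by
        rw [div_lt_iff₀ hτ]
        calc t < b := ht.2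
        _ = ((k : ℝ) + 1) * τ := by push_cast [b]; ring
      have : ⌊t / τ⌋ = (k : ℤ) :=
        Int.floor_eq_iff.2 ⟨by exact_mod_cast h1, by exact_mod_cast h2⟩
      rw [this]; push_cast [a]; ring
    set c : EuclideanSpace ℝ (Fin n) := f (z a)
    have key : ∀ y ∈ Set.Icc a b, z y = z a + (y - a) • c := by
      apply eq_of_has_deriv_right_eq (f' := fun _ => c)
      · intro t ht
        have hmem : t ∈ Set.Ico (0 : ℝ) (N * τ) :=
          ⟨ha0.trans ht.1, lt_of_lt_of_le ht.2 hk1N⟩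
        have := hz' t hmem
        rwa [hfloor t ht] at this
      · intro t ht
        have : HasDerivAt (fun y : ℝ => z a + (y - a) • c) ((1 : ℝ) • c) t := by
          exact (((hasDerivAt_id t).sub_const a).smul_const c).const_add (z a)
        simpa using this.hasDerivWithinAt
      · exact hzc.mono (Set.Icc_subset_Icc ha0 hk1N)
      · exact (continuousOn_const.add ((continuousOn_id.sub continuousOn_const).smul
          continuousOn_const))
      · simp
    have hb : z b = z a + τ • c := by
      have := key b ⟨hkk1.le, le_rfl⟩
      rw [this]
      congr 1
      have : b - a = τ := by push_cast [a, b]; ring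
      rw [this]
    rw [hb, Function.iterate_succ_apply']
    simp only [c]
    rw [hc]
end

section
/- Let n ≥ 1, N a natural number, x ∈ ℝ^n, and for each k = 0, 1, ..., N-1 let f_k : ℝ^n → ℝ^n. Let z : ℝ → ℝ^n be continuous on [0, N] with z(0) = x, such that for every natural number k < N and every t ∈ [k, k+1), z has right derivative f_k(z(k)) at t (derivative within [t, ∞)). Then for every k < N, z(k+1) = z(k) + f_k(z(k)); equivalently, z(N) is obtained from x by successively applying the residual maps y ↦ y + f_k(y) for k = 0, ..., N-1. -/
open Set

/-- The affine function `t ↦ z a + (t - a) • c` has the same right derivative and the same value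
at `a`, so the two agree on `[a, b]`. -/
theorem eq_add_smul_of_hasDerivWithinAt_Ici_const {E : Type*} [NormedAddCommGroup E]
    [NormedSpace ℝ E] {z : ℝ → E} {a b : ℝ} {c : E} (hab : a ≤ b)
    (hz : ContinuousOn z (Icc a b)) (hderiv : ∀ t ∈ Ico a b, HasDerivWithinAt z c (Ici t) t) :
    z b = z a + (b - a) • c := by
  have haffine : ∀ t : ℝ, HasDerivAt (fun s : ℝ => z a + (s - a) • c) c t := fun t => by
    simpa using (((hasDerivAt_id t).sub_const a).smul_const c).const_add (z a)
  refine eq_of_has_deriv_right_eq hderiv (fun t _ => (haffine t).hasDerivWithinAt) hz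
    (by fun_prop) (by simp) b ⟨hab, le_rfl⟩

theorem unshared_npcdde_is_resnet_general
    (n : ℕ) (N : ℕ)
    (f : ℕ → EuclideanSpace ℝ (Fin n) → EuclideanSpace ℝ (Fin n))
    (z : ℝ → EuclideanSpace ℝ (Fin n))
    (hzc : ContinuousOn z (Set.Icc 0 (N : ℝ)))
    (hz' : ∀ k < N, ∀ t ∈ Set.Ico ((k : ℝ)) ((k : ℝ) + 1),
      HasDerivWithinAt z (f k (z k)) (Set.Ici t) t) :
    ∀ k < N, z ((k : ℝ) + 1) = z k + f k (z k) := by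
  intro k hk
  have hkN : (k : ℝ) + 1 ≤ N := by exact_mod_cast hk
  have hsub : Icc (k : ℝ) (k + 1) ⊆ Icc 0 (N : ℝ) := Icc_subset_Icc (Nat.cast_nonneg k) hkN
  simpa using eq_add_smul_of_hasDerivWithinAt_Ici_const (by linarith) (hzc.mono hsub) (hz' k hk)

theorem unshared_npcdde_is_resnet
    (n : ℕ) (hn : 1 ≤ n) (N : ℕ)
    (f : ℕ → EuclideanSpace ℝ (Fin n) → EuclideanSpace ℝ (Fin n))
    (x : EuclideanSpace ℝ (Fin n)) (z : ℝ → EuclideanSpace ℝ (Fin n))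
    (hzc : ContinuousOn z (Set.Icc 0 (N : ℝ)))
    (hz0 : z 0 = x)
    (hz' : ∀ k < N, ∀ t ∈ Set.Ico ((k : ℝ)) ((k : ℝ) + 1),
      HasDerivWithinAt z (f k (z k)) (Set.Ici t) t) :
    ∀ k < N, z ((k : ℝ) + 1) = z k + f k (z k) :=
  unshared_npcdde_is_resnet_general n N f z hzc hz'
end
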